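/- Monotone decay of the DEKI spread energy: suppose ‖A_t‖ ≤ A_max for all t ≥ 1, that E_0 > 0, and that the step size satisfies h ≤ (α/(J(A_max + α)²))·E_0^{-1}. Then for every t ∈ ℕ one has E_{t+1} ≤ E_t − (hα/J)·E_t²; in particular the sequence (E_t) is monotonically decreasing. -/

import Mathlib

open Matrix BigOperators

noncomputable section

/-- Sample mean of an ensemble. -/
def ensMean {d : ℕ} (J : ℕ) (z : Fin J → Fin d → ℝ) : Fin d → ℝ :=
  (J : ℝ)⁻¹ • ∑ j, z j

/-- Ensemble spread `e^{(j)} = z^{(j)} - z̄`. -/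
def ensSpread {d : ℕ} (J : ℕ) (z : Fin J → Fin d → ℝ) (j : Fin J) : Fin d → ℝ :=
  z j - ensMean J z

/-- Sample covariance `C = (1/J) ∑_j e^{(j)} (e^{(j)})ᵀ`. -/
def ensCov {d : ℕ} (J : ℕ) (z : Fin J → Fin d → ℝ) : Matrix (Fin d) (Fin d) ℝ :=
  (J : ℝ)⁻¹ • ∑ j, vecMulVec (ensSpread J z j) (ensSpread J z j)

/-- Squared Euclidean norm of a vector in `ℝ^d`. -/
def enormSq {d : ℕ} (v : Fin d → ℝ) : ℝ := ∑ i, (v i)^2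

/-- Ensemble spread energy `E = (1/J)∑_j ‖e^{(j)}‖²`. -/
def ensEnergy {d : ℕ} (J : ℕ) (z : Fin J → Fin d → ℝ) : ℝ :=
  (J : ℝ)⁻¹ * ∑ j, enormSq (ensSpread J z j)

/-- The (Euclidean) operator norm of a square matrix. -/
def opNorm {d : ℕ} (M : Matrix (Fin d) (Fin d) ℝ) : ℝ :=
  ‖Matrix.toEuclideanCLM (𝕜 := ℝ) M‖

/-!
The spreads evolve autonomously, `e' = (1 - h C B) e` with `B = SᵀS + α I`, because the data `u`
shifts every member by the same vector. Expanding,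
`E' = E - (2h/J) ∑ⱼ ⟪eⱼ, C B eⱼ⟫ + (h²/J) ∑ⱼ ‖C B eⱼ‖²`.
With `G` the Gram matrix of the spreads, `∑ⱼ ⟪eⱼ, C B eⱼ⟫ = J⁻¹ ∑ⱼₖ Gⱼₖ ⟪eⱼ, B eₖ⟫`; the `SᵀS`
part is nonnegative by the Schur product theorem and the `α` part is
`α ∑ⱼₖ Gⱼₖ² ≥ α (tr G)² / J = α J E²`. Since `‖C‖ ≤ tr C = E` and `‖B‖ ≤ A_max + α`, this gives
`E' ≤ E - (2hα/J) E² + h² (A_max + α)² E³`, and the step-size condition makes the cubic term at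
most half of the quadratic one as long as `E ≤ E₀`, which then propagates by induction.
-/

section Gram

variable {ι n : Type*} [Fintype ι] [Fintype n]

theorem sum_sum_dotProduct_mul_dotProduct_mulVec_nonneg {M : Matrix n n ℝ} (hM : M.PosSemidef)
    (e : ι → n → ℝ) : 0 ≤ ∑ j, ∑ k, (e j ⬝ᵥ e k) * (e j ⬝ᵥ M *ᵥ e k) := by
  classical
  set E : Matrix ι n ℝ := Matrix.of e
  have hG : (E * Eᵀ).PosSemidef := by simpa using posSemidef_self_mul_conjTranspose E
  have hH : (E * M * Eᵀ).PosSemidef := by simpa using hM.mul_mul_conjTranspose_same E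
  have hGjk : ∀ j k, (E * Eᵀ) j k = e j ⬝ᵥ e k := fun j k => by simp [E, mul_apply, dotProduct]
  have hHjk : ∀ j k, (E * M * Eᵀ) j k = e j ⬝ᵥ M *ᵥ e k := fun j k => by
    rw [Matrix.mul_assoc]
    simp [E, mul_apply, dotProduct, mulVec]
  simpa [dotProduct, mulVec, hGjk, hHjk] using (hG.hadamard hH).dotProduct_mulVec_nonneg 1

theorem sq_sum_dotProduct_self_le (e : ι → n → ℝ) :
    (∑ j, e j ⬝ᵥ e j) ^ 2 ≤ Fintype.card ι * ∑ j, ∑ k, (e j ⬝ᵥ e k) ^ 2 := by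
  calc (∑ j, e j ⬝ᵥ e j) ^ 2 ≤ Fintype.card ι * ∑ j, (e j ⬝ᵥ e j) ^ 2 :=
        sq_sum_le_card_mul_sum_sq
    _ ≤ Fintype.card ι * ∑ j, ∑ k, (e j ⬝ᵥ e k) ^ 2 := by
        gcongr with j
        exact Finset.single_le_sum (f := fun k => (e j ⬝ᵥ e k) ^ 2)
          (fun _ _ => sq_nonneg _) (Finset.mem_univ j)

end Gram

section Ensemble

variable {d J : ℕ}

theorem enormSq_eq_dotProduct (v : Fin d → ℝ) : enormSq v = v ⬝ᵥ v := by
  simp [enormSq, dotProduct, sq]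

theorem enormSq_eq_norm_sq (v : Fin d → ℝ) : enormSq v = ‖WithLp.toLp 2 v‖ ^ 2 := by
  simp [enormSq, EuclideanSpace.real_norm_sq_eq]

theorem enormSq_nonneg (v : Fin d → ℝ) : 0 ≤ enormSq v := by
  rw [enormSq_eq_norm_sq]
  positivity

theorem enormSq_sub_smul (a b : Fin d → ℝ) (h : ℝ) :
    enormSq (a - h • b) = enormSq a - 2 * h * (a ⬝ᵥ b) + h ^ 2 * enormSq b := by
  simp only [enormSq_eq_dotProduct, sub_dotProduct, dotProduct_sub, smul_dotProduct,
    dotProduct_smul, dotProduct_comm b a, smul_eq_mul]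
  ring

theorem ensCov_mulVec (z : Fin J → Fin d → ℝ) (v : Fin d → ℝ) :
    ensCov J z *ᵥ v = (J : ℝ)⁻¹ • ∑ k, (ensSpread J z k ⬝ᵥ v) • ensSpread J z k := by
  simp [ensCov, smul_mulVec, sum_mulVec, vecMulVec_mulVec]

theorem sum_dotProduct_ensCov_mulVec (z : Fin J → Fin d → ℝ) (M : Matrix (Fin d) (Fin d) ℝ) :
    ∑ j, ensSpread J z j ⬝ᵥ (ensCov J z *ᵥ (M *ᵥ ensSpread J z j)) =
      (J : ℝ)⁻¹ * ∑ j, ∑ k, (ensSpread J z j ⬝ᵥ ensSpread J z k) *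
        (ensSpread J z j ⬝ᵥ M *ᵥ ensSpread J z k) := by
  simp only [ensCov_mulVec, dotProduct_smul, dotProduct_sum, smul_eq_mul, ← Finset.mul_sum]
  rw [Finset.sum_comm]
  simp only [dotProduct_comm (ensSpread J z _) (ensSpread J z _), mul_comm]

theorem natCast_mul_ensEnergy (hJ : J ≠ 0) (z : Fin J → Fin d → ℝ) :
    J * ensEnergy J z = ∑ j, enormSq (ensSpread J z j) := by
  rw [ensEnergy, ← mul_assoc, mul_inv_cancel₀ (by exact_mod_cast hJ), one_mul]

theorem ensEnergy_nonneg (z : Fin J → Fin d → ℝ) : 0 ≤ ensEnergy J z :=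
  mul_nonneg (by positivity) (Finset.sum_nonneg fun j _ => enormSq_nonneg _)

theorem mul_sq_ensEnergy_le (hJ : J ≠ 0) {M : Matrix (Fin d) (Fin d) ℝ} (hM : M.PosSemidef)
    {α : ℝ} (hα : 0 ≤ α) (z : Fin J → Fin d → ℝ) :
    α * ensEnergy J z ^ 2 ≤
      ∑ j, ensSpread J z j ⬝ᵥ (ensCov J z *ᵥ ((M + α • 1) *ᵥ ensSpread J z j)) := by
  rw [sum_dotProduct_ensCov_mulVec]
  set e := ensSpread J z
  set E := ensEnergy J z
  have hJ' : (0 : ℝ) < J := by positivity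
  have hsplit : ∀ j k, (e j ⬝ᵥ e k) * (e j ⬝ᵥ (M + α • 1) *ᵥ e k) =
      (e j ⬝ᵥ e k) * (e j ⬝ᵥ M *ᵥ e k) + α * (e j ⬝ᵥ e k) ^ 2 := by
    simp only [add_mulVec, smul_mulVec, one_mulVec, dotProduct_add, dotProduct_smul, smul_eq_mul]
    intro j k
    ring
  have hcross := sum_sum_dotProduct_mul_dotProduct_mulVec_nonneg hM e
  have hdiag : J * E ^ 2 ≤ ∑ j, ∑ k, (e j ⬝ᵥ e k) ^ 2 := by
    have hsum : ∑ j, e j ⬝ᵥ e j = J * E := by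
      simp only [← enormSq_eq_dotProduct, natCast_mul_ensEnergy hJ, e, E]
    have := sq_sum_dotProduct_self_le e
    rw [Fintype.card_fin, hsum] at this
    nlinarith
  simp only [hsplit, Finset.sum_add_distrib, ← Finset.mul_sum]
  calc α * E ^ 2 = (J : ℝ)⁻¹ * (α * (J * E ^ 2)) := by field_simp
    _ ≤ _ := by gcongr; linarith [mul_le_mul_of_nonneg_left hdiag hα]

end Ensemble

section Bounds

variable {d J : ℕ}

theorem abs_dotProduct_le (a b : Fin d → ℝ) :
    |a ⬝ᵥ b| ≤ ‖WithLp.toLp 2 a‖ * ‖WithLp.toLp 2 b‖ := by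
  simpa [EuclideanSpace.inner_toLp_toLp, dotProduct_comm] using
    abs_real_inner_le_norm (WithLp.toLp 2 a) (WithLp.toLp 2 b)

theorem enormSq_ensCov_mulVec_le (z : Fin J → Fin d → ℝ) (v : Fin d → ℝ) :
    enormSq (ensCov J z *ᵥ v) ≤ ensEnergy J z ^ 2 * enormSq v := by
  set e := ensSpread J z
  have hnorm : ‖WithLp.toLp 2 (ensCov J z *ᵥ v)‖ ≤ ensEnergy J z * ‖WithLp.toLp 2 v‖ := by
    rw [ensCov_mulVec, WithLp.toLp_smul, WithLp.toLp_sum, norm_smul,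
      Real.norm_of_nonneg (by positivity)]
    calc (J : ℝ)⁻¹ * ‖∑ k, WithLp.toLp 2 ((e k ⬝ᵥ v) • e k)‖
        ≤ (J : ℝ)⁻¹ * ∑ k, ‖WithLp.toLp 2 (e k)‖ ^ 2 * ‖WithLp.toLp 2 v‖ := by
          gcongr
          refine (norm_sum_le _ _).trans (Finset.sum_le_sum fun k _ => ?_)
          rw [WithLp.toLp_smul, norm_smul, sq, mul_assoc, mul_comm, Real.norm_eq_abs]
          gcongr
          exact abs_dotProduct_le _ _
      _ = ensEnergy J z * ‖WithLp.toLp 2 v‖ := by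
          simp only [← enormSq_eq_norm_sq, ← Finset.sum_mul, ensEnergy, e, mul_assoc]
  rw [enormSq_eq_norm_sq, enormSq_eq_norm_sq, ← mul_pow]
  gcongr

theorem enormSq_mulVec_le (M : Matrix (Fin d) (Fin d) ℝ) (v : Fin d → ℝ) :
    enormSq (M *ᵥ v) ≤ opNorm M ^ 2 * enormSq v := by
  rw [enormSq_eq_norm_sq, enormSq_eq_norm_sq, ← mul_pow, ← toEuclideanCLM_toLp]
  gcongr
  exact (toEuclideanCLM (𝕜 := ℝ) M).le_opNorm _

theorem opNorm_add_smul_one_le (M : Matrix (Fin d) (Fin d) ℝ) {α : ℝ} (hα : 0 ≤ α) :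
    opNorm (M + α • 1) ≤ opNorm M + α := by
  rw [opNorm, opNorm, map_add, map_smul, map_one]
  refine (norm_add_le _ _).trans (add_le_add_right ?_ _)
  rw [norm_smul, Real.norm_of_nonneg hα]
  exact mul_le_of_le_one_right hα ContinuousLinearMap.norm_id_le

end Bounds

section Affine

variable {d J : ℕ}

theorem ensMean_mulVec_add (hJ : J ≠ 0) (M : Matrix (Fin d) (Fin d) ℝ) (c : Fin d → ℝ)
    (z : Fin J → Fin d → ℝ) :
    ensMean J (fun j => M *ᵥ z j + c) = M *ᵥ ensMean J z + c := by
  have hJ' : (J : ℝ) ≠ 0 := by exact_mod_cast hJ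
  rw [ensMean, ensMean, Finset.sum_add_distrib, ← mulVec_sum, Finset.sum_const, Finset.card_univ,
    Fintype.card_fin, smul_add, mulVec_smul, ← Nat.cast_smul_eq_nsmul ℝ, smul_smul,
    inv_mul_cancel₀ hJ', one_smul]

theorem ensSpread_mulVec_add (hJ : J ≠ 0) (M : Matrix (Fin d) (Fin d) ℝ) (c : Fin d → ℝ)
    (z : Fin J → Fin d → ℝ) (j : Fin J) :
    ensSpread J (fun j => M *ᵥ z j + c) j = M *ᵥ ensSpread J z j := by
  simp [ensSpread, ensMean_mulVec_add hJ, mulVec_sub]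

end Affine

section Step

variable {d p J : ℕ}

def dekiStep (J : ℕ) (h α : ℝ) (S : Matrix (Fin p) (Fin d) ℝ) (u : Fin p → ℝ)
    (z : Fin J → Fin d → ℝ) : Fin J → Fin d → ℝ :=
  fun j => z j - h • (ensCov J z *ᵥ (Sᵀ *ᵥ (S *ᵥ z j - u) + α • z j))

theorem dekiStep_eq_mulVec_add (h α : ℝ) (S : Matrix (Fin p) (Fin d) ℝ) (u : Fin p → ℝ)
    (z : Fin J → Fin d → ℝ) :
    dekiStep J h α S u z = fun j =>
      (1 - h • (ensCov J z * (Sᵀ * S + α • 1))) *ᵥ z j + h • (ensCov J z *ᵥ (Sᵀ *ᵥ u)) := by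
  ext j : 1
  simp only [dekiStep, sub_mulVec, smul_mulVec, one_mulVec, ← mulVec_mulVec, add_mulVec,
    mulVec_sub, mulVec_add, mulVec_smul]
  module

theorem ensSpread_dekiStep (hJ : J ≠ 0) (h α : ℝ) (S : Matrix (Fin p) (Fin d) ℝ)
    (u : Fin p → ℝ) (z : Fin J → Fin d → ℝ) (j : Fin J) :
    ensSpread J (dekiStep J h α S u z) j =
      ensSpread J z j - h • (ensCov J z *ᵥ ((Sᵀ * S + α • 1) *ᵥ ensSpread J z j)) := by
  rw [dekiStep_eq_mulVec_add, ensSpread_mulVec_add hJ, sub_mulVec, one_mulVec, smul_mulVec,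
    mulVec_mulVec]

theorem ensEnergy_dekiStep_le (hJ : J ≠ 0) {h α K : ℝ} (hh : 0 ≤ h) (hα : 0 ≤ α)
    (S : Matrix (Fin p) (Fin d) ℝ) (u : Fin p → ℝ) (hS : opNorm (Sᵀ * S) ≤ K)
    (z : Fin J → Fin d → ℝ) :
    ensEnergy J (dekiStep J h α S u z) ≤ ensEnergy J z - 2 * (h * α / J) * ensEnergy J z ^ 2
      + h ^ 2 * (K + α) ^ 2 * ensEnergy J z ^ 3 := by
  set E := ensEnergy J z
  set e := ensSpread J z
  set B := Sᵀ * S + α • 1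
  set w := fun j => ensCov J z *ᵥ (B *ᵥ e j)
  have hlow : α * E ^ 2 ≤ ∑ j, e j ⬝ᵥ w j :=
    mul_sq_ensEnergy_le hJ (by simpa using posSemidef_conjTranspose_mul_self S) hα z
  have hup : ∀ j, enormSq (w j) ≤ E ^ 2 * (K + α) ^ 2 * enormSq (e j) := fun j => by
    have hB : opNorm B ≤ K + α := (opNorm_add_smul_one_le _ hα).trans (by linarith)
    calc enormSq (w j) ≤ E ^ 2 * (opNorm B ^ 2 * enormSq (e j)) :=
          (enormSq_ensCov_mulVec_le z _).trans (by gcongr; exact enormSq_mulVec_le B _)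
      _ ≤ E ^ 2 * (K + α) ^ 2 * enormSq (e j) := by
          rw [← mul_assoc]
          gcongr
          · exact enormSq_nonneg _
          · exact norm_nonneg _
  calc ensEnergy J (dekiStep J h α S u z)
      = E - 2 * h * ((J : ℝ)⁻¹ * ∑ j, e j ⬝ᵥ w j) + h ^ 2 * ((J : ℝ)⁻¹ * ∑ j, enormSq (w j)) := by
        simp only [ensEnergy, ensSpread_dekiStep hJ, enormSq_sub_smul, Finset.sum_add_distrib,
          Finset.sum_sub_distrib, ← Finset.mul_sum, E, e, w, B]
        ring
    _ ≤ E - 2 * h * ((J : ℝ)⁻¹ * (α * E ^ 2))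
          + h ^ 2 * ((J : ℝ)⁻¹ * ∑ j, E ^ 2 * (K + α) ^ 2 * enormSq (e j)) := by
        gcongr
        exact hup _
    _ = _ := by
        rw [← Finset.mul_sum, show E = (J : ℝ)⁻¹ * ∑ j, enormSq (e j) from rfl]
        ring

end Step

theorem succ_le_sub_mul_sq_of_cubic_step {E : ℕ → ℝ} {a b : ℝ} (hb : 0 ≤ b)
    (hE : ∀ t, 0 ≤ E t) (h0 : b * E 0 ≤ a)
    (hstep : ∀ t, E (t + 1) ≤ E t - 2 * a * E t ^ 2 + b * E t ^ 3) (t : ℕ) :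
    E (t + 1) ≤ E t - a * E t ^ 2 := by
  have hdec : ∀ t, E t ≤ E 0 → E (t + 1) ≤ E t - a * E t ^ 2 := fun t ht => by
    have hcube : b * E t ^ 3 ≤ a * E t ^ 2 :=
      calc b * E t ^ 3 = b * E t * E t ^ 2 := by ring
        _ ≤ a * E t ^ 2 := by gcongr; exact (mul_le_mul_of_nonneg_left ht hb).trans h0
    linarith [hstep t]
  have ha : 0 ≤ a := (mul_nonneg hb (hE 0)).trans h0
  have hbound : ∀ t, E t ≤ E 0 := by
    intro t
    induction t with
    | zero => exact le_rfl
    | succ t ih => exact (hdec t ih).trans ((sub_le_self _ (by positivity)).trans ih)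
  exact hdec t (hbound t)

theorem deki_energy_monotone_decay_general
    {d p J : ℕ} (hJ : 0 < J)
    (α h Amax : ℝ) (hα : 0 < α) (hh : 0 < h) (hAmax : 0 < Amax)
    (S : ℕ → Matrix (Fin p) (Fin d) ℝ) (u : ℕ → Fin p → ℝ)
    (z : ℕ → Fin J → Fin d → ℝ)
    (hupd : ∀ t j, z (t+1) j = z t j -
      h • ((ensCov J (z t)) *ᵥ ((S (t+1))ᵀ *ᵥ ((S (t+1)) *ᵥ (z t j) - u (t+1)) + α • z t j)))
    (hA : ∀ t : ℕ, 1 ≤ t → opNorm ((S t)ᵀ * (S t)) ≤ Amax)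
    (hE0 : 0 < ensEnergy J (z 0))
    (hstep : h ≤ α / ((J:ℝ) * (Amax + α)^2) * (ensEnergy J (z 0))⁻¹) :
    (∀ t : ℕ, ensEnergy J (z (t+1)) ≤ ensEnergy J (z t)
        - (h*α/(J:ℝ)) * (ensEnergy J (z t))^2) ∧
    Antitone (fun t => ensEnergy J (z t)) := by
  have hcubic : ∀ t, ensEnergy J (z (t + 1)) ≤ ensEnergy J (z t)
      - 2 * (h * α / J) * ensEnergy J (z t) ^ 2
      + h ^ 2 * (Amax + α) ^ 2 * ensEnergy J (z t) ^ 3 := by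
    intro t
    rw [show z (t + 1) = dekiStep J h α (S (t + 1)) (u (t + 1)) (z t) from funext (hupd t)]
    exact ensEnergy_dekiStep_le hJ.ne' hh.le hα.le _ _ (hA (t + 1) (Nat.le_add_left 1 t)) _
  have h0 : h ^ 2 * (Amax + α) ^ 2 * ensEnergy J (z 0) ≤ h * α / J := by
    have hJ' : (J : ℝ) ≠ 0 := by positivity
    have hK : Amax + α ≠ 0 := by positivity
    calc h ^ 2 * (Amax + α) ^ 2 * ensEnergy J (z 0)
        = h * ((Amax + α) ^ 2 * ensEnergy J (z 0)) * h := by ring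
      _ ≤ α / (J * (Amax + α) ^ 2) * (ensEnergy J (z 0))⁻¹ * ((Amax + α) ^ 2 * ensEnergy J (z 0))
          * h := by gcongr
      _ = h * α / J := by field_simp
  have hdecay :=
    succ_le_sub_mul_sq_of_cubic_step (by positivity) (fun t => ensEnergy_nonneg _) h0 hcubic
  exact ⟨hdecay, antitone_nat_of_succ_le fun t => (hdecay t).trans (sub_le_self _ (by positivity))⟩

/-- Monotone decay of the DEKI spread energy: if `‖A_t‖ ≤ A_max` for all `t ≥ 1`,
`E_0 > 0` and `h ≤ (α/(J(A_max + α)²))·E_0⁻¹`, then for every `t ∈ ℕ` one has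
`E_{t+1} ≤ E_t − (hα/J)·E_t²`; in particular `(E_t)` is monotonically decreasing. -/
theorem deki_energy_monotone_decay
    {d p J : ℕ} (hd : 0 < d) (hp : 0 < p) (hJ : 0 < J)
    (α h Amax : ℝ) (hα : 0 < α) (hh : 0 < h) (hAmax : 0 < Amax)
    (S : ℕ → Matrix (Fin p) (Fin d) ℝ) (u : ℕ → Fin p → ℝ)
    (z : ℕ → Fin J → Fin d → ℝ)
    (hupd : ∀ t j, z (t+1) j = z t j -
      h • ((ensCov J (z t)) *ᵥ ((S (t+1))ᵀ *ᵥ ((S (t+1)) *ᵥ (z t j) - u (t+1)) + α • z t j)))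
    (hA : ∀ t : ℕ, 1 ≤ t → opNorm ((S t)ᵀ * (S t)) ≤ Amax)
    (hE0 : 0 < ensEnergy J (z 0))
    (hstep : h ≤ α / ((J:ℝ) * (Amax + α)^2) * (ensEnergy J (z 0))⁻¹) :
    (∀ t : ℕ, ensEnergy J (z (t+1)) ≤ ensEnergy J (z t)
        - (h*α/(J:ℝ)) * (ensEnergy J (z t))^2) ∧
    Antitone (fun t => ensEnergy J (z t)) :=
  deki_energy_monotone_decay_general hJ α h Amax hα hh hAmax S u z hupd hA hE0 hstep
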